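/- arXiv:2402.12090 — 5 statements merged into one kernel-verified Lean document; each statement's English description precedes it below -/
import Mathlib

section
/- Let f : ℝⁿ → ℝ be continuously differentiable with a global minimizer x*, and suppose f is γ-smooth (∇f is γ-Lipschitz, γ > 0) and weak-strongly-convex with parameters a, μ > 0, i.e. f(x) − f(x*) ≤ (1/a)⟨∇f(x), x − x*⟩ − (μ/2)‖x − x*‖² for all x. Then for any x ∈ ℝⁿ and any step size η with 0 < η ≤ a/γ, the gradient descent step x̃ = x − η∇f(x) satisfies ‖x̃ − x*‖² ≤ (1 − aμη)‖x − x*‖². -/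
set_option maxHeartbeats 1000000

open scoped RealInnerProductSpace

lemma descent_lemma {n : ℕ} (f : EuclideanSpace ℝ (Fin n) → ℝ) (hf : ContDiff ℝ 1 f)
    (γ : ℝ) (hγ : 0 < γ)
    (hsmooth : ∀ x y, ‖gradient f x - gradient f y‖ ≤ γ * ‖x - y‖)
    (x y : EuclideanSpace ℝ (Fin n)) :
    f y ≤ f x + ⟪gradient f x, y - x⟫ + γ / 2 * ‖y - x‖ ^ 2 := by
  set v := y - x with hv
  have hd : ∀ p, HasGradientAt f (gradient f p) p := fun p =>
    (hf.differentiable one_ne_zero p).hasGradientAt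
  have hline : ∀ t : ℝ, HasDerivAt (fun t : ℝ => x + t • v) v t := fun t => by
    simpa using ((hasDerivAt_id t).smul_const v).const_add x
  have hderiv : ∀ t : ℝ,
      HasDerivAt (fun t : ℝ => f (x + t • v)) ⟪gradient f (x + t • v), v⟫ t := fun t => by
    have h1 := ((hd (x + t • v)).hasFDerivAt).comp_hasDerivAt t (hline t)
    rw [InnerProductSpace.toDual_apply_apply] at h1; exact h1
  have hgradcont : Continuous (gradient f) := by
    have : Continuous (fderiv ℝ f) := hf.continuous_fderiv one_ne_zero
    exact (InnerProductSpace.toDual ℝ (EuclideanSpace ℝ (Fin n))).symm.continuous.comp this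
  have hcont : Continuous (fun t : ℝ => ⟪gradient f (x + t • v), v⟫) := by
    apply Continuous.inner
    · exact hgradcont.comp (by continuity)
    · exact continuous_const
  have hint : (∫ t in (0:ℝ)..1, ⟪gradient f (x + t • v), v⟫) = f y - f x := by
    have := intervalIntegral.integral_eq_sub_of_hasDerivAt
      (fun t _ => hderiv t) (hcont.intervalIntegrable 0 1)
    simpa [hv] using this
  have hbound : (∫ t in (0:ℝ)..1, ⟪gradient f (x + t • v), v⟫)
      ≤ ∫ t in (0:ℝ)..1, (⟪gradient f x, v⟫ + γ * t * ‖v‖ ^ 2) := by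
    apply intervalIntegral.integral_mono_on (by norm_num)
      (hcont.intervalIntegrable 0 1)
      ((Continuous.intervalIntegrable (by continuity) 0 1))
    intro t ht
    have h1 : ⟪gradient f (x + t • v) - gradient f x, v⟫
        ≤ ‖gradient f (x + t • v) - gradient f x‖ * ‖v‖ :=
      real_inner_le_norm _ _
    have h2 : ‖gradient f (x + t • v) - gradient f x‖ ≤ γ * (t * ‖v‖) := by
      have := hsmooth (x + t • v) x
      simpa [norm_smul, abs_of_nonneg ht.1] using this
    have h3 : ⟪gradient f (x + t • v) - gradient f x, v⟫
        = ⟪gradient f (x + t • v), v⟫ - ⟪gradient f x, v⟫ := by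
      rw [inner_sub_left]
    have h4 := mul_le_mul_of_nonneg_right h2 (norm_nonneg v)
    have h5 : γ * (t * ‖v‖) * ‖v‖ = γ * t * ‖v‖ ^ 2 := by ring
    rw [h5] at h4
    linarith
  have hintval : (∫ t in (0:ℝ)..1, (⟪gradient f x, v⟫ + γ * t * ‖v‖ ^ 2))
      = ⟪gradient f x, v⟫ + γ / 2 * ‖v‖ ^ 2 := by
    rw [intervalIntegral.integral_add (intervalIntegrable_const)
      (Continuous.intervalIntegrable (by continuity) 0 1)]
    simp only [intervalIntegral.integral_const, smul_eq_mul, one_smul, sub_zero]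
    have : (∫ t in (0:ℝ)..1, γ * t * ‖v‖ ^ 2)
        = (γ * ‖v‖ ^ 2) * ∫ t in (0:ℝ)..1, t := by
      rw [← intervalIntegral.integral_const_mul]
      congr 1; ext t; ring
    rw [this, integral_id]
    ring
  rw [hint, hintval] at hbound
  linarith

/-- Linear convergence of gradient descent for smooth weak-strongly-convex functions on ℝⁿ
(Proposition `convergence`, Lemma 4.2 of Bu–Mesbahi). -/
theorem gradient_descent_contraction_of_weak_strong_convex {n : ℕ}
    (f : EuclideanSpace ℝ (Fin n) → ℝ) (hf : ContDiff ℝ 1 f)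
    (xstar : EuclideanSpace ℝ (Fin n)) (hmin : ∀ y, f xstar ≤ f y)
    (γ : ℝ) (hγ : 0 < γ)
    (hsmooth : ∀ x y, ‖gradient f x - gradient f y‖ ≤ γ * ‖x - y‖)
    (a μ : ℝ) (ha : 0 < a) (hμ : 0 < μ)
    (hwsc : ∀ x, f x - f xstar ≤
      (1 / a) * ⟪gradient f x, x - xstar⟫ - (μ / 2) * ‖x - xstar‖ ^ 2)
    (x : EuclideanSpace ℝ (Fin n)) (η : ℝ) (hη : 0 < η) (hηa : η ≤ a / γ) :
    ‖(x - η • gradient f x) - xstar‖ ^ 2 ≤ (1 - a * μ * η) * ‖x - xstar‖ ^ 2 := by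
  set g := gradient f x with hg
  set d := x - xstar with hd
  -- key1 : f x - f xstar ≥ ‖g‖²/(2γ)
  have key1 : ‖g‖ ^ 2 / (2 * γ) ≤ f x - f xstar := by
    have hdl := descent_lemma f hf γ hγ hsmooth x (x - (1/γ) • g)
    have h1 : (x - (1/γ) • g) - x = -((1/γ) • g) := by abel
    have h2 : ⟪g, -((1/γ) • g)⟫ = -(1/γ) * ‖g‖ ^ 2 := by
      rw [inner_neg_right, real_inner_smul_right, real_inner_self_eq_norm_sq]; ring
    have h3 : ‖-((1/γ) • g)‖ ^ 2 = (1/γ) ^ 2 * ‖g‖ ^ 2 := by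
      rw [norm_neg, norm_smul, Real.norm_eq_abs, abs_of_nonneg (le_of_lt (one_div_pos.mpr hγ))]
      ring
    rw [h1, h2, h3] at hdl
    have h4 := hmin (x - (1/γ) • g)
    have e : f x + (-(1/γ) * ‖g‖ ^ 2) + γ / 2 * ((1/γ) ^ 2 * ‖g‖ ^ 2)
        = f x - ‖g‖ ^ 2 / (2 * γ) := by field_simp; ring
    rw [e] at hdl
    linarith
  -- key2 from hwsc
  have key2 : a * (f x - f xstar) + a * μ / 2 * ‖d‖ ^ 2 ≤ ⟪g, d⟫ := by
    have := hwsc x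
    rw [← hg, ← hd] at this
    have h := mul_le_mul_of_nonneg_left this (le_of_lt ha)
    have e : a * ((1 / a) * ⟪g, d⟫ - μ / 2 * ‖d‖ ^ 2)
        = ⟪g, d⟫ - a * μ / 2 * ‖d‖ ^ 2 := by field_simp
    rw [e] at h
    linarith
  -- expansion
  have hexp : ‖(x - η • g) - xstar‖ ^ 2 = ‖d‖ ^ 2 - 2 * η * ⟪g, d⟫ + η ^ 2 * ‖g‖ ^ 2 := by
    have h1 : (x - η • g) - xstar = d - η • g := by rw [hd]; abel
    rw [h1, norm_sub_sq_real, real_inner_smul_right, norm_smul, real_inner_comm]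
    simp [abs_of_nonneg (le_of_lt hη)]
    ring
  rw [hexp]
  have hγη : η * γ ≤ a := by
    rw [le_div_iff₀ hγ] at hηa; linarith
  have hfx : 0 ≤ f x - f xstar := by linarith [hmin x]
  have t1 : ‖g‖ ^ 2 ≤ (f x - f xstar) * (2 * γ) := (div_le_iff₀ (by positivity)).mp key1
  have t2 : η * γ * ‖g‖ ^ 2 ≤ a * ‖g‖ ^ 2 :=
    mul_le_mul_of_nonneg_right hγη (sq_nonneg _)
  have t3 : η * ‖g‖ ^ 2 ≤ 2 * a * (f x - f xstar) := by
    have h1 : a * ‖g‖ ^ 2 ≤ a * ((f x - f xstar) * (2 * γ)) :=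
      mul_le_mul_of_nonneg_left t1 ha.le
    nlinarith [mul_pos hη hγ]
  have t4 : η * (η * ‖g‖ ^ 2) ≤ η * (2 * a * (f x - f xstar)) :=
    mul_le_mul_of_nonneg_left t3 hη.le
  have t5 : 2 * η * (a * (f x - f xstar) + a * μ / 2 * ‖d‖ ^ 2) ≤ 2 * η * ⟪g, d⟫ :=
    mul_le_mul_of_nonneg_left key2 (by positivity)
  nlinarith [t4, t5]
end

section
/- Let E ⊆ ℝⁿ be open and convex, let f : E → ℝ be continuously differentiable with a global minimizer x* ∈ E. Suppose f satisfies f(x) − f(x*) ≥ (1/(2γ))‖∇f(x)‖² for all x ∈ E (with γ > 0) and f is weak-strongly-convex with parameters a, μ > 0. Then for any x ∈ E and any step size η with 0 < η ≤ a/γ such that the point x̃ = x − η∇f(x) is well-defined, it holds that ‖x̃ − x*‖² ≤ (1 − aμη)‖x − x*‖². -/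
open scoped RealInnerProductSpace

/-- Linear convergence of gradient descent on an open convex set `E ⊆ ℝⁿ`, under the weaker
smoothness-type inequality `f(x) - f(x*) ≥ (1/(2γ))‖∇f(x)‖²` and weak-strong-convexity. -/
theorem gradient_descent_contraction_on_set {n : ℕ}
    (E : Set (EuclideanSpace ℝ (Fin n))) (hE : IsOpen E) (hEconv : Convex ℝ E)
    (f : EuclideanSpace ℝ (Fin n) → ℝ) (hf : ContDiffOn ℝ 1 f E)
    (xstar : EuclideanSpace ℝ (Fin n)) (hxstar : xstar ∈ E)
    (hmin : ∀ y ∈ E, f xstar ≤ f y)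
    (γ : ℝ) (hγ : 0 < γ)
    (hweak : ∀ x ∈ E, f x - f xstar ≥ (1 / (2 * γ)) * ‖gradient f x‖ ^ 2)
    (a μ : ℝ) (ha : 0 < a) (hμ : 0 < μ)
    (hwsc : ∀ xs ∈ E, (∀ y ∈ E, f xs ≤ f y) → ∀ x ∈ E,
      f x - f xs ≤ (1 / a) * ⟪gradient f x, x - xs⟫ - (μ / 2) * ‖x - xs‖ ^ 2)
    (x : EuclideanSpace ℝ (Fin n)) (hx : x ∈ E)
    (η : ℝ) (hη : 0 < η) (hηa : η ≤ a / γ)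
    (hstep : x - η • gradient f x ∈ E) :
    ‖(x - η • gradient f x) - xstar‖ ^ 2 ≤ (1 - a * μ * η) * ‖x - xstar‖ ^ 2 := by

  set g := gradient f x with hg
  have hwsc' := hwsc xstar hxstar hmin x hx
  have hweak' := hweak x hx
  have hmin' := hmin x hx
  have hrw : (x - η • g) - xstar = (x - xstar) - η • g := by abel
  rw [hrw]
  have hexp : ‖(x - xstar) - η • g‖ ^ 2
      = ‖x - xstar‖ ^ 2 - 2 * (η * ⟪g, x - xstar⟫) + η ^ 2 * ‖g‖ ^ 2 := by
    rw [norm_sub_sq_real, real_inner_smul_right, norm_smul, Real.norm_eq_abs, abs_of_pos hη,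
      real_inner_comm (x - xstar) g]
    ring
  rw [hexp]
  have hinner : ⟪g, x - xstar⟫ ≥ a * (f x - f xstar) + a * (μ / 2) * ‖x - xstar‖ ^ 2 := by
    have h := hwsc'
    have : (1 / a) * ⟪g, x - xstar⟫ ≥ f x - f xstar + (μ / 2) * ‖x - xstar‖ ^ 2 := by
      linarith
    calc ⟪g, x - xstar⟫ = a * ((1 / a) * ⟪g, x - xstar⟫) := by field_simp
      _ ≥ a * (f x - f xstar + (μ / 2) * ‖x - xstar‖ ^ 2) := by
          exact mul_le_mul_of_nonneg_left this ha.le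
      _ = a * (f x - f xstar) + a * (μ / 2) * ‖x - xstar‖ ^ 2 := by ring
  have hηγ : η * γ ≤ a := (le_div_iff₀ hγ).mp hηa
  have hfg : f x - f xstar ≥ (1 / (2 * γ)) * ‖g‖ ^ 2 := hweak'
  have hF : f x - f xstar ≥ 0 := by linarith
  have h2γ : ‖g‖ ^ 2 ≤ 2 * γ * (f x - f xstar) := by
    have := mul_le_mul_of_nonneg_left hfg (by positivity : (0:ℝ) ≤ 2 * γ)
    calc ‖g‖ ^ 2 = 2 * γ * (1 / (2 * γ) * ‖g‖ ^ 2) := by field_simp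
      _ ≤ 2 * γ * (f x - f xstar) := this
  nlinarith [mul_le_mul_of_nonneg_left hinner (by positivity : (0:ℝ) ≤ 2 * η),
    mul_le_mul_of_nonneg_left h2γ (sq_nonneg η),
    mul_le_mul_of_nonneg_right hηγ (by positivity : (0:ℝ) ≤ 2 * η * (f x - f xstar))]
end

section
/- Let E ⊆ ℝⁿ be open and convex, and let f : E → ℝ be continuously differentiable, γ-smooth (γ > 0), with a unique global minimizer x* ∈ E. Fix a step size η > 0 and a constant 0 < c ≤ 1, and suppose that for every x ∈ E the gradient descent step x̃ = x − η∇f(x) satisfies ‖x̃ − x*‖² ≤ (1 − c)‖x − x*‖². Then f is weak-strongly-convex on E with parameters a = (1/(2γη)) · c/(1 − √c/2) and μ = γ/2; explicitly, for every x ∈ E, f(x) − f(x*) ≤ 2γη((1 − √c/2)/c)⟨∇f(x), x − x*⟩ − (γ/4)‖x − x*‖². -/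
open scoped RealInnerProductSpace

lemma wsc_aux53 (s u : ℝ) (h : s^2 + u^2 = 1) (hs0 : 0 ≤ s) (hu0 : 0 ≤ u) :
    4*s + 3*u ≤ 5 := by
  nlinarith [sq_nonneg (3*s - 4*u), sq_nonneg (4*s + 3*u)]

lemma wsc_algebra (η p G D c s u : ℝ) (hη : 0 < η) (hc : 0 < c)
    (hexp : c * D^2 + η^2 * G^2 ≤ 2 * η * p) (hCS : |p| ≤ G * D) (hD0 : 0 ≤ D)
    (hs2 : s^2 = c) (hu2 : u^2 = 1 - c) (hs0 : 0 ≤ s) (hu0 : 0 ≤ u) (hu1 : u ≤ 1)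
    (hs1 : s ≤ 1) :
    3 * c * D^2 ≤ 4 * (2 - s) * (η * p) := by
  have h53 : 4*s + 3*u ≤ 5 := wsc_aux53 s u (by linarith) hs0 hu0
  rcases eq_or_lt_of_le hD0 with hDz | hDpos
  · have hD2 : D^2 = 0 := by rw [← hDz]; ring
    have hp0 : 0 ≤ p := by nlinarith [sq_nonneg G, sq_nonneg η, mul_pos hη hη]
    nlinarith [mul_nonneg (mul_nonneg (by linarith : (0:ℝ) ≤ 2 - s) hη.le) hp0, hD2]
  · have hpsq : p^2 ≤ (G*D)^2 :=
      sq_le_sq' (by linarith [neg_abs_le p]) (by linarith [le_abs_self p])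
    have hp2 : η^2 * p^2 ≤ η^2 * G^2 * D^2 := by
      nlinarith [mul_le_mul_of_nonneg_left hpsq (sq_nonneg η)]
    have h1 : c * D^4 + η^2 * p^2 ≤ 2 * η * p * D^2 := by
      nlinarith [mul_le_mul_of_nonneg_right hexp (sq_nonneg D), hp2]
    have hu4 : u^2 * D^4 = (1 - c) * D^4 := by rw [hu2]
    have hsq : (η * p - D^2)^2 ≤ (u * D^2)^2 := by nlinarith [h1, hu4]
    have hqp : (1 - u) * D^2 ≤ η * p := by
      nlinarith [hsq, mul_nonneg hu0 (sq_nonneg D)]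
    have hfac : 0 ≤ (1 - u) * (5 - 4*s - 3*u) * D^2 :=
      mul_nonneg (mul_nonneg (by linarith) (by linarith)) (sq_nonneg D)
    have h7 : 4*(2 - s) * ((1 - u) * D^2) ≤ 4*(2 - s) * (η * p) :=
      mul_le_mul_of_nonneg_left hqp (by linarith)
    nlinarith [hfac, h7]

/-- Main theorem: if gradient descent with step size `η` contracts the squared distance to the
unique minimizer of a `γ`-smooth function by a factor `1 - c` from every point of `E`, then the
function is weak-strongly-convex on `E` with parameters `a = (1/(2γη))·c/(1 - √c/2)` and
`μ = γ/2`. -/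
theorem weak_strong_convex_of_linear_convergence {n : ℕ}
    (E : Set (EuclideanSpace ℝ (Fin n))) (hE : IsOpen E) (hEconv : Convex ℝ E)
    (f : EuclideanSpace ℝ (Fin n) → ℝ) (hf : ContDiffOn ℝ 1 f E)
    (γ : ℝ) (hγ : 0 < γ)
    (hsmooth : ∀ x ∈ E, ∀ y ∈ E, ‖gradient f x - gradient f y‖ ≤ γ * ‖x - y‖)
    (xstar : EuclideanSpace ℝ (Fin n)) (hxstar : xstar ∈ E)
    (hmin : ∀ y ∈ E, f xstar ≤ f y)
    (huniq : ∀ y ∈ E, (∀ z ∈ E, f y ≤ f z) → y = xstar)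
    (η : ℝ) (hη : 0 < η) (c : ℝ) (hc : 0 < c) (hc1 : c ≤ 1)
    (hcontr : ∀ x ∈ E,
      ‖(x - η • gradient f x) - xstar‖ ^ 2 ≤ (1 - c) * ‖x - xstar‖ ^ 2) :
    ∀ x ∈ E, f x - f xstar ≤
      2 * γ * η * ((1 - Real.sqrt c / 2) / c) * ⟪gradient f x, x - xstar⟫
        - (γ / 4) * ‖x - xstar‖ ^ 2 := by
  have hdiffOn : DifferentiableOn ℝ f E := hf.differentiableOn one_ne_zero
  -- gradient vanishes at the minimizer
  have hgradstar : gradient f xstar = 0 := by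
    have hloc : IsLocalMin f xstar := by
      filter_upwards [hE.mem_nhds hxstar] with y hy using hmin y hy
    have hdiff : DifferentiableAt ℝ f xstar :=
      hdiffOn.differentiableAt (hE.mem_nhds hxstar)
    have h0 : fderiv ℝ f xstar = 0 := hloc.fderiv_eq_zero
    have := hdiff.hasGradientAt
    rw [gradient, h0, map_zero]
  have hgradcont : ContinuousOn (gradient f) E := by
    have h1 : ContinuousOn (fderiv ℝ f) E := hf.continuousOn_fderiv_of_isOpen hE le_rfl
    exact (InnerProductSpace.toDual ℝ (EuclideanSpace ℝ (Fin n))).symm.continuous.comp_continuousOn h1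
  intro x hx
  set d := x - xstar with hd
  set g : ℝ → EuclideanSpace ℝ (Fin n) := fun t => xstar + t • d with hg
  have hgmem : ∀ t ∈ Set.Icc (0:ℝ) 1, g t ∈ E := fun t ht =>
    hEconv.add_smul_sub_mem hxstar hx ht
  -- descent lemma: f x - f xstar ≤ γ/2 ‖d‖²
  have hderiv : ∀ t ∈ Set.uIcc (0:ℝ) 1,
      HasDerivAt (fun t => f (g t)) ⟪gradient f (g t), d⟫ t := by
    intro t ht
    rw [Set.uIcc_of_le zero_le_one] at ht
    have hmem := hgmem t ht
    have hdf : DifferentiableAt ℝ f (g t) := hdiffOn.differentiableAt (hE.mem_nhds hmem)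
    have h1 := hdf.hasGradientAt.hasFDerivAt
    have h2 : HasDerivAt (fun t : ℝ => xstar + t • d) d t := by
      simpa using ((hasDerivAt_id t).smul_const d).const_add xstar
    have h3 := h1.comp_hasDerivAt t h2
    simpa [InnerProductSpace.toDual_apply_apply, Function.comp_def] using h3
  have hcontg : ContinuousOn g (Set.Icc (0:ℝ) 1) :=
    (continuous_const.add (continuous_id.smul continuous_const)).continuousOn
  have hφcont : ContinuousOn (fun t => ⟪gradient f (g t), d⟫) (Set.Icc (0:ℝ) 1) :=
    (hgradcont.comp hcontg hgmem).inner continuousOn_const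
  have hint : IntervalIntegrable (fun t => ⟪gradient f (g t), d⟫)
      MeasureTheory.volume 0 1 :=
    ContinuousOn.intervalIntegrable_of_Icc zero_le_one hφcont
  have hFTC : ∫ t in (0:ℝ)..1, ⟪gradient f (g t), d⟫ = f (g 1) - f (g 0) :=
    intervalIntegral.integral_eq_sub_of_hasDerivAt hderiv hint
  have hg1 : g 1 = x := by simp [hg, hd]
  have hg0 : g 0 = xstar := by simp [hg]
  have hb : ∀ t ∈ Set.Icc (0:ℝ) 1, ⟪gradient f (g t), d⟫ ≤ γ * t * ‖d‖^2 := by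
    intro t ht
    have hmem := hgmem t ht
    have h1 : ⟪gradient f (g t), d⟫ = ⟪gradient f (g t) - gradient f xstar, d⟫ := by
      rw [hgradstar, sub_zero]
    have h2 : ⟪gradient f (g t) - gradient f xstar, d⟫
        ≤ ‖gradient f (g t) - gradient f xstar‖ * ‖d‖ := real_inner_le_norm _ _
    have h3 : ‖gradient f (g t) - gradient f xstar‖ ≤ γ * ‖g t - xstar‖ :=
      hsmooth _ hmem _ hxstar
    have h4 : ‖g t - xstar‖ = t * ‖d‖ := by
      rw [hg]; simp [norm_smul, abs_of_nonneg ht.1]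
    calc ⟪gradient f (g t), d⟫ ≤ ‖gradient f (g t) - gradient f xstar‖ * ‖d‖ := by
          rw [h1]; exact h2
      _ ≤ (γ * ‖g t - xstar‖) * ‖d‖ := by
          exact mul_le_mul_of_nonneg_right h3 (norm_nonneg _)
      _ = γ * t * ‖d‖^2 := by rw [h4]; ring
  have hint2 : IntervalIntegrable (fun t : ℝ => γ * t * ‖d‖^2)
      MeasureTheory.volume 0 1 :=
    (((continuous_const.mul continuous_id).mul continuous_const).intervalIntegrable 0 1)
  have hmono : ∫ t in (0:ℝ)..1, ⟪gradient f (g t), d⟫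
      ≤ ∫ t in (0:ℝ)..1, γ * t * ‖d‖^2 :=
    intervalIntegral.integral_mono_on zero_le_one hint hint2 hb
  have hval : ∫ t in (0:ℝ)..1, γ * t * ‖d‖^2 = γ/2 * ‖d‖^2 := by
    have he : (fun t : ℝ => γ * t * ‖d‖^2) = fun t : ℝ => t * (γ * ‖d‖^2) := by
      funext t; ring
    rw [he, intervalIntegral.integral_mul_const, integral_id]; ring
  have key : f x - f xstar ≤ γ/2 * ‖d‖^2 := by
    rw [hg1, hg0] at hFTC; linarith [hmono, hval, hFTC]
  -- expand the contraction inequality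
  set p := ⟪gradient f x, d⟫ with hp
  set G := ‖gradient f x‖ with hG
  set D := ‖d‖ with hD
  have hexp : c * D^2 + η^2 * G^2 ≤ 2 * η * p := by
    have h := hcontr x hx
    have h1 : x - η • gradient f x - xstar = d - η • gradient f x := by
      rw [hd]; abel
    rw [h1, @norm_sub_sq_real, real_inner_smul_right, real_inner_comm, norm_smul,
      mul_pow, Real.norm_eq_abs, abs_of_pos hη, ← hd] at h
    rw [hp, hG, hD]
    nlinarith [h]
  have hCS : |p| ≤ G * D := abs_real_inner_le_norm _ _
  set s := Real.sqrt c with hs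
  set u := Real.sqrt (1 - c) with hu
  have hs2 : s^2 = c := Real.sq_sqrt hc.le
  have hu2 : u^2 = 1 - c := Real.sq_sqrt (by linarith)
  have hs0 : 0 ≤ s := Real.sqrt_nonneg _
  have hu0 : 0 ≤ u := Real.sqrt_nonneg _
  have hu1 : u ≤ 1 := by
    rw [hu]; exact Real.sqrt_le_one.mpr (by linarith)
  have hs1 : s ≤ 1 := by
    rw [hs]; exact Real.sqrt_le_one.mpr hc1
  have hD0 : 0 ≤ D := norm_nonneg _
  have hmain : 3 * c * D^2 ≤ 4 * (2 - s) * (η * p) :=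
    wsc_algebra η p G D c s u hη hc hexp hCS hD0 hs2 hu2 hs0 hu0 hu1 hs1
  -- conclude
  have h6 : γ/(4*c) * (3 * c * D^2) ≤ γ/(4*c) * (4 * (2 - s) * (η * p)) :=
    mul_le_mul_of_nonneg_left hmain (by positivity)
  have e1 : γ/(4*c) * (3 * c * D^2) = 3*γ/4 * D^2 := by
    field_simp
  have e2 : γ/(4*c) * (4 * (2 - s) * (η * p)) = 2*γ*η*((1 - s/2)/c) * p := by
    field_simp
  rw [e1, e2] at h6
  linarith [key]
end

section
/- Let A be a symmetric positive definite n×n real matrix, let f : ℝⁿ → ℝ be continuously differentiable with global minimizer x*, and suppose ‖∇f(x) − ∇f(y)‖_{A⁻¹} ≤ γ‖x − y‖_A for all x, y ∈ ℝⁿ (γ > 0). Suppose further that f satisfies, for some a, μ > 0 and all x ∈ ℝⁿ, f(x) − f(x*) ≤ (1/a)⟨∇f(x), x − x*⟩ − (μ/2)(x − x*)ᵀA(x − x*). Then for any x ∈ ℝⁿ and any step size 0 < η ≤ a/γ, the preconditioned gradient descent step x̃ = x − ηA⁻¹∇f(x) satisfies ‖x̃ − x*‖_A² ≤ (1 − aμη)‖x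 − x*‖_A². -/
open scoped RealInnerProductSpace Matrix

private lemma cs_aux {n : ℕ} (L : EuclideanSpace ℝ (Fin n) →ₗ[ℝ] EuclideanSpace ℝ (Fin n))
    (hsym : ∀ u v, ⟪L u, v⟫ = ⟪u, L v⟫)
    (hpos : ∀ u, 0 ≤ ⟪u, L u⟫) (u v : EuclideanSpace ℝ (Fin n)) :
    ⟪u, L v⟫ ≤ Real.sqrt ⟪u, L u⟫ * Real.sqrt ⟪v, L v⟫ := by
  have key : ∀ t : ℝ, 0 ≤ ⟪v, L v⟫ * (t * t) + (2 * ⟪u, L v⟫) * t + ⟪u, L u⟫ := by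
    intro t
    have h0 := hpos (u + t • v)
    have h1 : ⟪v, L u⟫ = ⟪u, L v⟫ := by
      rw [← hsym v u, real_inner_comm]
    simp only [map_add, map_smul, inner_add_left, inner_add_right, real_inner_smul_left,
      real_inner_smul_right, h1] at h0
    nlinarith [h0]
  have hd := discrim_le_zero key
  rw [discrim] at hd
  have hsq : ⟪u, L v⟫ ^ 2 ≤ ⟪u, L u⟫ * ⟪v, L v⟫ := by nlinarith [hd]
  calc ⟪u, L v⟫ ≤ |⟪u, L v⟫| := le_abs_self _
    _ = Real.sqrt (⟪u, L v⟫ ^ 2) := (Real.sqrt_sq_eq_abs _).symm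
    _ ≤ Real.sqrt (⟪u, L u⟫ * ⟪v, L v⟫) := Real.sqrt_le_sqrt hsq
    _ = Real.sqrt ⟪u, L u⟫ * Real.sqrt ⟪v, L v⟫ := Real.sqrt_mul (hpos u) _

set_option maxHeartbeats 1000000 in
/-- Linear convergence of preconditioned gradient descent: if `f` satisfies geodesic
`γ`-smoothness and weak-strong-convexity with respect to the metric induced by a symmetric
positive definite matrix `A`, then the preconditioned step `x̃ = x - ηA⁻¹∇f(x)` with
`0 < η ≤ a/γ` contracts the squared `A`-distance to the minimizer by a factor `1 - aμη`. -/
theorem preconditioned_gd_contraction {n : ℕ}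
    (A : Matrix (Fin n) (Fin n) ℝ) (hA : A.PosDef)
    (f : EuclideanSpace ℝ (Fin n) → ℝ) (hf : ContDiff ℝ 1 f)
    (xstar : EuclideanSpace ℝ (Fin n)) (hmin : ∀ y, f xstar ≤ f y)
    (γ : ℝ) (hγ : 0 < γ)
    (hsmooth : ∀ x y : EuclideanSpace ℝ (Fin n),
      Real.sqrt ⟪gradient f x - gradient f y,
          Matrix.toEuclideanLin A⁻¹ (gradient f x - gradient f y)⟫ ≤
        γ * Real.sqrt ⟪x - y, Matrix.toEuclideanLin A (x - y)⟫)
    (a μ : ℝ) (ha : 0 < a) (hμ : 0 < μ)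
    (hwsc : ∀ x : EuclideanSpace ℝ (Fin n), f x - f xstar ≤
      (1 / a) * ⟪gradient f x, x - xstar⟫
        - (μ / 2) * ⟪x - xstar, Matrix.toEuclideanLin A (x - xstar)⟫)
    (x : EuclideanSpace ℝ (Fin n)) (η : ℝ) (hη : 0 < η) (hηa : η ≤ a / γ) :
    ⟪(x - η • Matrix.toEuclideanLin A⁻¹ (gradient f x)) - xstar,
        Matrix.toEuclideanLin A ((x - η • Matrix.toEuclideanLin A⁻¹ (gradient f x)) - xstar)⟫ ≤
      (1 - a * μ * η) * ⟪x - xstar, Matrix.toEuclideanLin A (x - xstar)⟫ := by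
  classical
  have hdiff : Differentiable ℝ f := hf.differentiable one_ne_zero
  set L := Matrix.toEuclideanLin A with hLdef
  set M := Matrix.toEuclideanLin A⁻¹ with hMdef
  have hAinv : (A⁻¹).PosDef := hA.inv
  -- inner products as dot products
  have hinner : ∀ (B : Matrix (Fin n) (Fin n) ℝ) (u w : EuclideanSpace ℝ (Fin n)),
      ⟪u, Matrix.toEuclideanLin B w⟫ =
        dotProduct (WithLp.equiv 2 _ u) (B *ᵥ (WithLp.equiv 2 _ w)) := by
    intro B u w
    simp [PiLp.inner_apply, Matrix.toEuclideanLin_apply, dotProduct, RCLike.inner_apply, mul_comm]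
  have hsymL : ∀ u v, ⟪L u, v⟫ = ⟪u, L v⟫ :=
    Matrix.isHermitian_iff_isSymmetric.mp hA.isHermitian
  have hsymM : ∀ u v, ⟪M u, v⟫ = ⟪u, M v⟫ :=
    Matrix.isHermitian_iff_isSymmetric.mp hAinv.isHermitian
  have hposL : ∀ u, 0 ≤ ⟪u, L u⟫ := by
    intro u
    rw [hLdef, hinner]
    simpa using hA.posSemidef.dotProduct_mulVec_nonneg (WithLp.equiv 2 _ u)
  have hposM : ∀ u, 0 ≤ ⟪u, M u⟫ := by
    intro u
    rw [hMdef, hinner]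
    simpa using hAinv.posSemidef.dotProduct_mulVec_nonneg (WithLp.equiv 2 _ u)
  have hLM : ∀ w, L (M w) = w := by
    intro w
    simp [hLdef, hMdef, Matrix.toEuclideanLin_apply, Matrix.mulVec_mulVec,
      Matrix.mul_nonsing_inv A (hA.isUnit.map (Matrix.detMonoidHom)) ]
  have hML : ∀ w, M (L w) = w := by
    intro w
    simp [hLdef, hMdef, Matrix.toEuclideanLin_apply, Matrix.mulVec_mulVec,
      Matrix.nonsing_inv_mul A (hA.isUnit.map (Matrix.detMonoidHom))]
  -- gradient and directional derivatives
  have hgradinner : ∀ (z v : EuclideanSpace ℝ (Fin n)),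
      ⟪gradient f z, v⟫ = fderiv ℝ f z v := by
    intro z v
    simp [gradient, InnerProductSpace.toDual_symm_apply]
  have hcomp : ∀ (y v : EuclideanSpace ℝ (Fin n)) (t : ℝ),
      HasDerivAt (fun s : ℝ => f (y + s • v)) ⟪gradient f (y + t • v), v⟫ t := by
    intro y v t
    have h1 : HasDerivAt (fun s : ℝ => y + s • v) v t := by
      simpa using ((hasDerivAt_id t).smul_const v).const_add y
    have h2 := ((hdiff (y + t • v)).hasFDerivAt).comp_hasDerivAt t h1
    rw [hgradinner]
    exact h2
  set g := gradient f x with hgdef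
  set d := x - xstar with hddef
  have hGnn : 0 ≤ ⟪g, M g⟫ := hposM g
  have hfd : (0:ℝ) ≤ f x - f xstar := sub_nonneg.mpr (hmin x)
  have hg0 : gradient f xstar = 0 := by
    have hlm : IsLocalMin f xstar := Filter.Eventually.of_forall hmin
    rw [gradient, hlm.fderiv_eq_zero, map_zero]
  -- descent lemma: G ≤ 2γ (f x - f xstar)
  have hdescent : ⟪g, M g⟫ ≤ 2 * γ * (f x - f xstar) := by
    set v := -(γ⁻¹) • M g with hvdef
    have hLv : L v = -(γ⁻¹) • g := by rw [hvdef, map_smul, hLM]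
    have hvLv : ⟪v, L v⟫ = γ⁻¹ ^ 2 * ⟪g, M g⟫ := by
      rw [hvdef, hLv, real_inner_smul_left, real_inner_smul_right, real_inner_comm (M g) g]
      ring
    have hgv : ⟪g, v⟫ = -(γ⁻¹) * ⟪g, M g⟫ := by
      rw [hvdef, real_inner_smul_right]
    set c := γ / 2 * ⟪v, L v⟫ with hcdef
    set φ : ℝ → ℝ := fun t => f (x + t • v) - f x - t * ⟪g, v⟫ - t ^ 2 * c with hφdef
    have hφd : ∀ t : ℝ,
        HasDerivAt φ (⟪gradient f (x + t • v), v⟫ - ⟪g, v⟫ - 2 * t * c) t := by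
      intro t
      have h1 := hcomp x v t
      have h2 : HasDerivAt (fun s : ℝ => f (x + s • v) - f x)
          ⟪gradient f (x + t • v), v⟫ t := h1.sub_const (f x)
      have h3 : HasDerivAt (fun s : ℝ => s * ⟪g, v⟫) ⟪g, v⟫ t := hasDerivAt_mul_const _
      have h4 : HasDerivAt (fun s : ℝ => s ^ 2 * c) (2 * t * c) t := by
        simpa [pow_one, mul_comm, mul_assoc, mul_left_comm] using (hasDerivAt_pow 2 t).mul_const c
      exact (h2.sub h3).sub h4
    have hφ' : ∀ t ∈ Set.Ioo (0:ℝ) 1, deriv φ t ≤ 0 := by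
      intro t ht
      rw [(hφd t).deriv]
      set p := gradient f (x + t • v) - g with hpdef
      have h4 : ⟪p, v⟫ ≤ Real.sqrt ⟪p, M p⟫ * Real.sqrt ⟪v, L v⟫ := by
        have h5 := cs_aux M hsymM hposM p (L v)
        rwa [hML, real_inner_comm v (L v)] at h5
      have h6 : Real.sqrt ⟪p, M p⟫ ≤ γ * Real.sqrt ⟪(x + t • v) - x, L ((x + t • v) - x)⟫ := by
        have := hsmooth (x + t • v) x
        rwa [← hgdef, ← hpdef] at this
      have h7 : (x + t • v) - x = t • v := add_sub_cancel_left x (t • v)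
      have h8 : ⟪t • v, L (t • v)⟫ = t ^ 2 * ⟪v, L v⟫ := by
        rw [map_smul, real_inner_smul_left, real_inner_smul_right]; ring
      have h9 : Real.sqrt ⟪(x + t • v) - x, L ((x + t • v) - x)⟫
          = t * Real.sqrt ⟪v, L v⟫ := by
        rw [h7, h8, Real.sqrt_mul (sq_nonneg t), Real.sqrt_sq ht.1.le]
      have h10 : Real.sqrt ⟪v, L v⟫ * Real.sqrt ⟪v, L v⟫ = ⟪v, L v⟫ :=
        Real.mul_self_sqrt (hposL v)
      have h11 : ⟪p, v⟫ ≤ γ * t * ⟪v, L v⟫ := by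
        calc ⟪p, v⟫ ≤ Real.sqrt ⟪p, M p⟫ * Real.sqrt ⟪v, L v⟫ := h4
          _ ≤ (γ * (t * Real.sqrt ⟪v, L v⟫)) * Real.sqrt ⟪v, L v⟫ := by
              apply mul_le_mul_of_nonneg_right _ (Real.sqrt_nonneg _)
              rw [← h9]; exact h6
          _ = γ * t * ⟪v, L v⟫ := by rw [mul_assoc, mul_assoc, h10]; ring
      have h12 : ⟪p, v⟫ = ⟪gradient f (x + t • v), v⟫ - ⟪g, v⟫ := inner_sub_left _ _ _
      have ht1 : t ≤ 1 := ht.2.le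
      nlinarith [h11, h12, hposL v, ht.1]
    have hmono : AntitoneOn φ (Set.Icc (0:ℝ) 1) := by
      refine antitoneOn_of_deriv_nonpos (convex_Icc 0 1)
        (fun t _ => (hφd t).continuousAt.continuousWithinAt)
        (fun t ht => (hφd t).differentiableAt.differentiableWithinAt)
        (fun t ht => hφ' t (by rwa [interior_Icc] at ht))
    have h01 : φ 1 ≤ φ 0 :=
      hmono (Set.left_mem_Icc.mpr zero_le_one) (Set.right_mem_Icc.mpr zero_le_one) zero_le_one
    have hφ0 : φ 0 = 0 := by simp [hφdef]
    have hφ1 : φ 1 = f (x + (1:ℝ) • v) - f x - ⟪g, v⟫ - c := by simp [hφdef]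
    have hstar : f xstar ≤ f (x + (1:ℝ) • v) := hmin _
    have hγinv : γ * γ⁻¹ = 1 := mul_inv_cancel₀ hγ.ne'
    have hfin : f xstar - f x - ⟪g, v⟫ - c ≤ 0 := by
      have := h01
      rw [hφ1, hφ0] at this
      linarith
    rw [hgv, hcdef, hvLv] at hfin
    have hG2 : γ / 2 * (γ⁻¹ ^ 2 * ⟪g, M g⟫) = γ⁻¹ * ⟪g, M g⟫ / 2 := by
      field_simp
    nlinarith [hfin, hG2, mul_pos hγ hγ, sq_nonneg γ⁻¹, hγ, hGnn]
  -- weak strong convexity, multiplied by a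
  have hwx : a * (f x - f xstar) + a * (μ / 2) * ⟪d, L d⟫ ≤ ⟪g, d⟫ := by
    have h := hwsc x
    rw [← hgdef, ← hddef] at h
    have h2 : a * (f x - f xstar) ≤ ⟪g, d⟫ - a * (μ / 2) * ⟪d, L d⟫ := by
      have := mul_le_mul_of_nonneg_left h ha.le
      calc a * (f x - f xstar) ≤ a * ((1 / a) * ⟪g, d⟫ - μ / 2 * ⟪d, L d⟫) := this
        _ = ⟪g, d⟫ - a * (μ / 2) * ⟪d, L d⟫ := by field_simp
    linarith
  -- expansion of the step
  have hstep : (x - η • M g) - xstar = d - η • M g := by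
    rw [hddef, sub_right_comm]
  have hexp : ⟪d - η • M g, L (d - η • M g)⟫ = ⟪d, L d⟫ - 2 * η * ⟪g, d⟫ + η ^ 2 * ⟪g, M g⟫ := by
    have h1 : ⟪M g, L d⟫ = ⟪g, d⟫ := by rw [← hsymL, hLM]
    have h2 : ⟪d, L (M g)⟫ = ⟪g, d⟫ := by rw [hLM, real_inner_comm]
    have h3 : ⟪M g, L (M g)⟫ = ⟪g, M g⟫ := by rw [hLM, real_inner_comm]
    simp only [map_sub, map_smul, inner_sub_left, inner_sub_right, real_inner_smul_left,
      real_inner_smul_right, h1, h2, h3]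
    ring
  rw [hstep, hexp]
  -- final arithmetic
  have hηγ : η * γ ≤ a := by
    rw [le_div_iff₀ hγ] at hηa
    exact hηa
  have hQnn : 0 ≤ ⟪d, L d⟫ := hposL d
  nlinarith [mul_le_mul_of_nonneg_left hdescent (mul_pos hη hη).le,
    mul_le_mul_of_nonneg_left hwx (by positivity : (0:ℝ) ≤ 2 * η),
    mul_nonneg (mul_nonneg hη.le hη.le) hGnn,
    mul_nonneg hη.le hfd, mul_le_mul_of_nonneg_right hηγ hfd,
    mul_nonneg hη.le (mul_nonneg hγ.le hfd)]
end

section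
/- Let A be a symmetric positive definite n×n real matrix, let f : ℝⁿ → ℝ be continuously differentiable with a unique global minimizer x*, and suppose ‖∇f(x) − ∇f(y)‖_{A⁻¹} ≤ γ‖x − y‖_A for all x, y ∈ ℝⁿ (γ > 0). Fix a step size η > 0 and a constant 0 < c ≤ 1, and suppose that for every x ∈ ℝⁿ the preconditioned gradient descent step x̃ = x − ηA⁻¹∇f(x) satisfies ‖x̃ − x*‖_A² ≤ (1 − c)‖x − x*‖_A². Then for every x ∈ ℝⁿ, f(x) − f(x*) ≤ 2γη((1 − √c/2)/c)⟨∇f(x), x − x*⟩ − (γ/4)(x − x*)ᵀA(x − x*). -/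
open scoped RealInnerProductSpace

section AuxPGD

variable {n : ℕ}

private lemma pgd_quad_nonneg {M : Matrix (Fin n) (Fin n) ℝ} (hM : M.PosSemidef)
    (v : EuclideanSpace ℝ (Fin n)) : 0 ≤ ⟪v, Matrix.toEuclideanLin M v⟫ := by
  rw [EuclideanSpace.inner_eq_star_dotProduct, Matrix.ofLp_toEuclideanLin_apply, dotProduct_comm]
  simpa using hM.re_dotProduct_nonneg (WithLp.equiv 2 _ v)

private lemma pgd_sym_apply {M : Matrix (Fin n) (Fin n) ℝ} (hM : M.IsHermitian)
    (u v : EuclideanSpace ℝ (Fin n)) :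
    ⟪Matrix.toEuclideanLin M u, v⟫ = ⟪u, Matrix.toEuclideanLin M v⟫ :=
  (Matrix.isHermitian_iff_isSymmetric.1 hM) u v

private lemma pgd_cs_quad {M : Matrix (Fin n) (Fin n) ℝ} (hM : M.PosSemidef)
    (u v : EuclideanSpace ℝ (Fin n)) :
    ⟪u, Matrix.toEuclideanLin M v⟫ ≤
      Real.sqrt ⟪u, Matrix.toEuclideanLin M u⟫ * Real.sqrt ⟪v, Matrix.toEuclideanLin M v⟫ := by
  set L := Matrix.toEuclideanLin M with hL
  have hsym := pgd_sym_apply hM.1 (n := n)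
  have hnn := pgd_quad_nonneg hM (n := n)
  have key : ∀ lam : ℝ, 0 ≤ ⟪v, L v⟫ * (lam * lam) + (2 * ⟪u, L v⟫) * lam + ⟪u, L u⟫ := by
    intro lam
    have h0 := hnn (u + lam • v)
    have hexp : ⟪u + lam • v, L (u + lam • v)⟫
        = ⟪v, L v⟫ * (lam * lam) + (2 * ⟪u, L v⟫) * lam + ⟪u, L u⟫ := by
      rw [map_add, map_smul]
      rw [inner_add_left, inner_add_right, inner_add_right]
      rw [real_inner_smul_left, real_inner_smul_right, real_inner_smul_left,
        real_inner_smul_right]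
      have h1 : ⟪v, L u⟫ = ⟪u, L v⟫ := by rw [← hsym u v, real_inner_comm]
      rw [h1]; ring
    linarith [hexp ▸ h0]
  have hdisc := discrim_le_zero key
  rw [discrim] at hdisc
  have hsq : ⟪u, L v⟫ ^ 2 ≤ ⟪u, L u⟫ * ⟪v, L v⟫ := by nlinarith
  calc ⟪u, L v⟫ ≤ |⟪u, L v⟫| := le_abs_self _
    _ = Real.sqrt (⟪u, L v⟫ ^ 2) := (Real.sqrt_sq_eq_abs _).symm
    _ ≤ Real.sqrt (⟪u, L u⟫ * ⟪v, L v⟫) := Real.sqrt_le_sqrt hsq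
    _ = _ := Real.sqrt_mul (hnn u) _

private lemma pgd_comp_inv {A : Matrix (Fin n) (Fin n) ℝ} (hA : A.PosDef)
    (w : EuclideanSpace ℝ (Fin n)) :
    Matrix.toEuclideanLin A (Matrix.toEuclideanLin A⁻¹ w) = w := by
  rw [Matrix.toEuclideanLin_apply, Matrix.toEuclideanLin_apply]
  have h : (WithLp.toLp 2 (Matrix.mulVec A⁻¹ w.ofLp)).ofLp
      = Matrix.mulVec A⁻¹ w.ofLp := rfl
  rw [h, Matrix.mulVec_mulVec, Matrix.mul_nonsing_inv A (Ne.isUnit hA.det_pos.ne'),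
    Matrix.one_mulVec]

/-- Mixed Cauchy–Schwarz: `⟪w, v⟫ ≤ ‖w‖_{A⁻¹} ‖v‖_A`. -/
private lemma pgd_inner_le_mixed {A : Matrix (Fin n) (Fin n) ℝ} (hA : A.PosDef)
    (w v : EuclideanSpace ℝ (Fin n)) :
    ⟪w, v⟫ ≤ Real.sqrt ⟪w, Matrix.toEuclideanLin A⁻¹ w⟫ *
      Real.sqrt ⟪v, Matrix.toEuclideanLin A v⟫ := by
  set u := Matrix.toEuclideanLin A⁻¹ w with hu
  have h1 : ⟪w, v⟫ = ⟪u, Matrix.toEuclideanLin A v⟫ := by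
    rw [← pgd_sym_apply hA.1 u v, pgd_comp_inv hA w]
  have h2 : ⟪u, Matrix.toEuclideanLin A u⟫ = ⟪w, Matrix.toEuclideanLin A⁻¹ w⟫ := by
    rw [← hu]
    have : ⟪Matrix.toEuclideanLin A u, u⟫ = ⟪w, u⟫ := by rw [pgd_comp_inv hA w]
    rw [← pgd_sym_apply hA.1 u u, this]
  rw [h1, ← h2]
  exact pgd_cs_quad hA.posSemidef u v

end AuxPGD

set_option maxHeartbeats 1000000 in
/-- Converse for preconditioned gradient descent: if the preconditioned step
`x̃ = x - ηA⁻¹∇f(x)` contracts the squared `A`-distance to the unique minimizer by a factor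
`1 - c` from every point, then `f` is weak-strongly-convex with respect to the `A`-metric with
parameters `a = (1/(2γη))·c/(1 - √c/2)` and `μ = γ/2`. -/
theorem weak_strong_convex_of_preconditioned_gd_convergence {n : ℕ}
    (A : Matrix (Fin n) (Fin n) ℝ) (hA : A.PosDef)
    (f : EuclideanSpace ℝ (Fin n) → ℝ) (hf : ContDiff ℝ 1 f)
    (xstar : EuclideanSpace ℝ (Fin n)) (hmin : ∀ y, f xstar ≤ f y)
    (huniq : ∀ y, (∀ z, f y ≤ f z) → y = xstar)
    (γ : ℝ) (hγ : 0 < γ)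
    (hsmooth : ∀ x y : EuclideanSpace ℝ (Fin n),
      Real.sqrt ⟪gradient f x - gradient f y,
          Matrix.toEuclideanLin A⁻¹ (gradient f x - gradient f y)⟫ ≤
        γ * Real.sqrt ⟪x - y, Matrix.toEuclideanLin A (x - y)⟫)
    (η : ℝ) (hη : 0 < η) (c : ℝ) (hc : 0 < c) (hc1 : c ≤ 1)
    (hcontr : ∀ x : EuclideanSpace ℝ (Fin n),
      ⟪(x - η • Matrix.toEuclideanLin A⁻¹ (gradient f x)) - xstar,
          Matrix.toEuclideanLin A
            ((x - η • Matrix.toEuclideanLin A⁻¹ (gradient f x)) - xstar)⟫ ≤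
        (1 - c) * ⟪x - xstar, Matrix.toEuclideanLin A (x - xstar)⟫) :
    ∀ x : EuclideanSpace ℝ (Fin n), f x - f xstar ≤
      2 * γ * η * ((1 - Real.sqrt c / 2) / c) * ⟪gradient f x, x - xstar⟫
        - (γ / 4) * ⟪x - xstar, Matrix.toEuclideanLin A (x - xstar)⟫ := by
  
  intro x
  set L := Matrix.toEuclideanLin A with hLdef
  set Linv := Matrix.toEuclideanLin A⁻¹ with hLinvdef
  have hdiff : Differentiable ℝ f := hf.differentiable one_ne_zero
  -- gradient vanishes at the minimizer
  have hgrad0 : gradient f xstar = 0 := by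
    have hloc : IsLocalMin f xstar := Filter.Eventually.of_forall hmin
    have h0 : fderiv ℝ f xstar = 0 := hloc.fderiv_eq_zero
    simp [gradient, h0]
  -- fderiv applied is the inner product with the gradient
  have hfd : ∀ z v : EuclideanSpace ℝ (Fin n), fderiv ℝ f z v = ⟪gradient f z, v⟫ := by
    intro z v
    have : fderiv ℝ f z = (InnerProductSpace.toDual ℝ _) (gradient f z) :=
      ((InnerProductSpace.toDual ℝ _).apply_symm_apply _).symm
    rw [this, InnerProductSpace.toDual_apply_apply]
  -- the descent bound: f x - f xstar ≤ γ/2 * ‖x - xstar‖_A²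
  set d := x - xstar with hd
  set qd : ℝ := ⟪d, L d⟫ with hqddef
  have hqd0 : 0 ≤ qd := pgd_quad_nonneg hA.posSemidef d
  have hgc : Continuous (gradient f) := by
    exact (InnerProductSpace.toDual ℝ
      (EuclideanSpace ℝ (Fin n))).symm.continuous.comp (hf.continuous_fderiv one_ne_zero)
  have hcont1 : Continuous fun τ : ℝ => ⟪gradient f (xstar + τ • d), d⟫ := by
    apply Continuous.inner
    · exact hgc.comp (continuous_const.add (continuous_id.smul continuous_const))
    · exact continuous_const
  have hphi : ∀ τ : ℝ, HasDerivAt (fun τ : ℝ => f (xstar + τ • d))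
      ⟪gradient f (xstar + τ • d), d⟫ τ := by
    intro τ
    have hcurve : HasDerivAt (fun τ : ℝ => xstar + τ • d) d τ := by
      simpa using ((hasDerivAt_id τ).smul_const d).const_add xstar
    have h1 := (hdiff (xstar + τ • d)).hasFDerivAt.comp_hasDerivAt τ hcurve
    rw [← hfd]; exact h1
  have hFTC : f x - f xstar = ∫ τ in (0:ℝ)..1, ⟪gradient f (xstar + τ • d), d⟫ := by
    have h := intervalIntegral.integral_eq_sub_of_hasDerivAt
      (f := fun τ : ℝ => f (xstar + τ • d)) (a := 0) (b := 1)
      (fun τ _ => hphi τ) (hcont1.intervalIntegrable 0 1)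
    have e1 : xstar + (1:ℝ) • d = x := by rw [one_smul, hd]; abel
    have e0 : xstar + (0:ℝ) • d = xstar := by rw [zero_smul, add_zero]
    rw [h]
    show f x - f xstar = f (xstar + (1:ℝ) • d) - f (xstar + (0:ℝ) • d)
    rw [e1, e0]
  have hbound : ∀ τ ∈ Set.Icc (0:ℝ) 1,
      ⟪gradient f (xstar + τ • d), d⟫ ≤ γ * τ * qd := by
    intro τ hτ
    set z := xstar + τ • d with hz
    have hzx : z - xstar = τ • d := by rw [hz]; abel
    calc ⟪gradient f z, d⟫ = ⟪gradient f z - gradient f xstar, d⟫ := by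
          rw [hgrad0, sub_zero]
      _ ≤ Real.sqrt ⟪gradient f z - gradient f xstar,
            Linv (gradient f z - gradient f xstar)⟫ * Real.sqrt qd :=
          pgd_inner_le_mixed hA _ d
      _ ≤ (γ * Real.sqrt ⟪z - xstar, L (z - xstar)⟫) * Real.sqrt qd :=
          mul_le_mul_of_nonneg_right (hsmooth z xstar) (Real.sqrt_nonneg _)
      _ = γ * τ * qd := by
          rw [hzx]
          have hq : ⟪τ • d, L (τ • d)⟫ = τ ^ 2 * qd := by
            rw [map_smul, real_inner_smul_left, real_inner_smul_right, hqddef]; ring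
          rw [hq, Real.sqrt_mul (sq_nonneg τ), Real.sqrt_sq hτ.1]
          rw [mul_assoc, mul_assoc, mul_assoc, Real.mul_self_sqrt hqd0]
  have hdesc : f x - f xstar ≤ γ / 2 * qd := by
    rw [hFTC]
    have hint : (∫ τ in (0:ℝ)..1, ⟪gradient f (xstar + τ • d), d⟫)
        ≤ ∫ τ in (0:ℝ)..1, γ * τ * qd := by
      apply intervalIntegral.integral_mono_on zero_le_one
        (hcont1.intervalIntegrable 0 1)
        (((continuous_const.mul continuous_id).mul continuous_const).intervalIntegrable 0 1)
        hbound
    have heval : (∫ τ in (0:ℝ)..1, γ * τ * qd) = γ / 2 * qd := by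
      have hfun : (fun τ : ℝ => γ * τ * qd) = fun τ : ℝ => (γ * qd) * τ := by
        funext τ; ring
      rw [hfun, intervalIntegral.integral_const_mul, integral_id]
      norm_num; ring
    linarith [heval ▸ hint]
  -- expand the contraction hypothesis
  set g := gradient f x with hg
  set u : EuclideanSpace ℝ (Fin n) := Linv g with hu
  have hLu : L u = g := pgd_comp_inv hA g
  set G : ℝ := ⟪g, u⟫ with hGdef
  set P : ℝ := ⟪g, d⟫ with hPdef
  have hG0 : 0 ≤ G := pgd_quad_nonneg (hA.inv).posSemidef g
  have h1 : η ^ 2 * G + c * qd ≤ 2 * η * P := by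
    have hc' := hcontr x
    have hrw : (x - η • u) - xstar = d - η • u := by rw [hd]; abel
    rw [hrw] at hc'
    have hE : ⟪d - η • u, L (d - η • u)⟫ = qd - 2 * η * P + η ^ 2 * G := by
      rw [map_sub, map_smul, hLu]
      rw [inner_sub_left, inner_sub_right, inner_sub_right]
      rw [real_inner_smul_left, real_inner_smul_right, real_inner_smul_left,
        real_inner_smul_right]
      have e1 : ⟪u, L d⟫ = P := by rw [← pgd_sym_apply hA.1 u d, hLu, hPdef]
      have e2 : ⟪d, g⟫ = P := by rw [hPdef, real_inner_comm]
      have e3 : ⟪u, g⟫ = G := by rw [hGdef, real_inner_comm]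
      rw [e1, e2, e3, hqddef]; ring
    rw [hE] at hc'
    nlinarith [hc']
  have h2 : P ≤ Real.sqrt G * Real.sqrt qd := by
    have := pgd_inner_le_mixed hA g d
    have hGu : ⟪g, Linv g⟫ = G := rfl
    rw [hGu] at this
    exact this
  -- final algebra
  set a := Real.sqrt c with ha
  set b := Real.sqrt (1 - c) with hb
  have ha0 : 0 < a := Real.sqrt_pos.2 hc
  have ha2 : a ^ 2 = c := Real.sq_sqrt hc.le
  have ha1 : a ≤ 1 := by
    rw [show (1:ℝ) = Real.sqrt 1 by rw [Real.sqrt_one]]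
    exact Real.sqrt_le_sqrt hc1
  have hb0 : 0 ≤ b := Real.sqrt_nonneg _
  have hb2 : b ^ 2 = 1 - c := Real.sq_sqrt (by linarith)
  have hb1 : b ≤ 1 := by
    rw [show (1:ℝ) = Real.sqrt 1 by rw [Real.sqrt_one]]
    exact Real.sqrt_le_sqrt (by linarith)
  set t := Real.sqrt qd with ht
  set σ := η * Real.sqrt G with hσdef
  have ht0 : 0 ≤ t := Real.sqrt_nonneg _
  have hσ0 : 0 ≤ σ := mul_nonneg hη.le (Real.sqrt_nonneg _)
  have hqdt : qd = t ^ 2 := (Real.sq_sqrt hqd0).symm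
  have hσ2 : σ ^ 2 = η ^ 2 * G := by
    rw [hσdef, mul_pow, Real.sq_sqrt hG0]
  have h1' : σ ^ 2 + a ^ 2 * t ^ 2 ≤ 2 * η * P := by
    rw [hσ2, ha2, ← hqdt]; exact h1
  have h2' : η * P ≤ σ * t := by
    calc η * P ≤ η * (Real.sqrt G * Real.sqrt qd) :=
          mul_le_mul_of_nonneg_left h2 hη.le
      _ = σ * t := by rw [hσdef, ht]; ring
  have hts : t - σ ≤ b * t := by
    have hstep : σ ^ 2 + a ^ 2 * t ^ 2 ≤ 2 * (σ * t) := by linarith [h1', h2']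
    have habt : a ^ 2 * t ^ 2 + b ^ 2 * t ^ 2 = t ^ 2 := by rw [ha2, hb2]; ring
    have hsq : (t - σ) ^ 2 ≤ (b * t) ^ 2 := by nlinarith [hstep, habt]
    calc t - σ ≤ |t - σ| := le_abs_self _
      _ = Real.sqrt ((t - σ) ^ 2) := (Real.sqrt_sq_eq_abs _).symm
      _ ≤ Real.sqrt ((b * t) ^ 2) := Real.sqrt_le_sqrt hsq
      _ = b * t := Real.sqrt_sq (mul_nonneg hb0 ht0)
  have hσlb : (1 - b) * t ≤ σ := by linarith
  -- key scalar inequality : 4a + 3b ≤ 5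
  have hab : a ^ 2 + b ^ 2 = 1 := by rw [ha2, hb2]; ring
  have key3 : 4 * a + 3 * b ≤ 5 := by nlinarith [sq_nonneg (3 * a - 4 * b), hab]
  have key1 : 2 * (1 - b) * t ^ 2 ≤ σ ^ 2 + a ^ 2 * t ^ 2 := by
    nlinarith [mul_self_le_mul_self (mul_nonneg (by linarith : (0:ℝ) ≤ 1 - b) ht0) hσlb, hab]
  have hhalf : (0:ℝ) ≤ γ * (1 - a / 2) := by nlinarith
  have c1 : γ * (1 - a / 2) * (2 * (1 - b) * t ^ 2) ≤ γ * (1 - a / 2) * (σ ^ 2 + a ^ 2 * t ^ 2) :=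
    mul_le_mul_of_nonneg_left key1 hhalf
  have c2 : γ * (3 / 4) * a ^ 2 * t ^ 2 ≤ γ * (1 - a / 2) * (2 * (1 - b) * t ^ 2) := by
    have h5 : (0:ℝ) ≤ 5 - 4 * a - 3 * b := by linarith
    have h1b : (0:ℝ) ≤ 1 - b := by linarith
    nlinarith [mul_nonneg (mul_nonneg (mul_nonneg hγ.le h1b) h5) (sq_nonneg t), hab,
      mul_nonneg hγ.le (sq_nonneg t)]
  have key2 : γ * (1 - a / 2) * (σ ^ 2 + a ^ 2 * t ^ 2) ≤ γ * (1 - a / 2) * (2 * η * P) :=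
    mul_le_mul_of_nonneg_left h1' hhalf
  -- assemble
  have hgoal : (f x - f xstar) * c ≤ 2 * γ * η * (1 - a / 2) * P - γ / 4 * qd * c := by
    have m1 : (f x - f xstar) * c ≤ (γ / 2 * qd) * c :=
      mul_le_mul_of_nonneg_right hdesc hc.le
    have m2 : γ * (3 / 4) * a ^ 2 * t ^ 2 ≤ γ * (1 - a / 2) * (2 * η * P) :=
      le_trans (le_trans c2 c1) key2
    have e : 2 * γ * η * (1 - a / 2) * P = γ * (1 - a / 2) * (2 * η * P) := by ring
    rw [e, hqdt, ← ha2]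
    rw [hqdt, ← ha2] at m1
    linarith [m1, m2]
  calc f x - f xstar = ((f x - f xstar) * c) / c := (mul_div_cancel_right₀ _ hc.ne').symm
    _ ≤ (2 * γ * η * (1 - a / 2) * P - γ / 4 * qd * c) / c := (div_le_div_iff_of_pos_right hc).mpr hgoal
    _ = 2 * γ * η * ((1 - a / 2) / c) * P - γ / 4 * qd := by
        rw [sub_div, mul_div_cancel_right₀ _ hc.ne']; ring
end
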